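/- arXiv:2404.13302 — 8 statements merged into one kernel-verified Lean document; each statement's English description precedes it below -/
import Mathlib

section
/- Let μ be a probability measure on a measurable space (Z, 𝒵) and for k = 0,…,T let ψₖ : Z → Z be measurable invertible maps. Define μₖ as the pushforward of μ by ψₖ⁻¹ and the mixture μ̄(A) = (T+1)⁻¹ ∑ₖ μₖ(A). Then for any μ-integrable f : Z → ℝ, ∫ f dμ = ∫ [∑ₖ (f ∘ ψₖ)(z) · μ̄(k | z)] μ̄(dz), where μ̄(k | z) = (T+1)⁻¹ · (dμₖ/dμ̄)(z) is the conditional probability of the index k given z under the joint distribution μ̄(k, dz) = (T+1)⁻¹ μₖ(dz). -/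
open MeasureTheory
open scoped ENNReal

theorem stmt0 {Z : Type*} [MeasurableSpace Z] (μ : Measure Z) [IsProbabilityMeasure μ]
    (T : ℕ) (ψ : Fin (T + 1) → Z ≃ᵐ Z) (f : Z → ℝ) (hf : Integrable f μ)
    (μk : Fin (T + 1) → Measure Z) (hμk : ∀ k, μk k = μ.map (ψ k).symm)
    (μbar : Measure Z) (hμbar : μbar = ((T : ℝ≥0∞) + 1)⁻¹ • ∑ k, μk k)
    (habs : ∀ k, μk k ≪ μbar) :
    ∫ z, f z ∂μ =
      ∫ z, ∑ k, f (ψ k z) * (((T : ℝ) + 1)⁻¹ * ((μk k).rnDeriv μbar z).toReal) ∂μbar := by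
  have hprob : ∀ k, IsProbabilityMeasure (μk k) := fun k => by
    rw [hμk]
    exact Measure.isProbabilityMeasure_map (ψ k).symm.measurable.aemeasurable
  have hfin : IsFiniteMeasure μbar := by
    constructor
    rw [hμbar]
    simp only [Measure.smul_apply, Measure.coe_finset_sum, Finset.sum_apply, smul_eq_mul]
    rw [Finset.sum_congr rfl (fun k _ => (hprob k).measure_univ)]
    simp only [Finset.sum_const, Finset.card_univ, Fintype.card_fin, nsmul_eq_mul, mul_one]
    exact lt_of_le_of_lt (mul_le_of_le_one_left zero_le
      (ENNReal.inv_le_one.mpr le_add_self)) (by simp)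
  have hint : ∀ k, Integrable (fun z => f (ψ k z)) (μk k) := fun k => by
    rw [hμk, (ψ k).symm.measurableEmbedding.integrable_map_iff]
    have he : ((fun z => f (ψ k z)) ∘ (ψ k).symm) = f := by funext z; simp
    rw [he]; exact hf
  have hintbar : ∀ k : Fin (T + 1), Integrable
      (fun z => f (ψ k z) * (((T : ℝ) + 1)⁻¹ * ((μk k).rnDeriv μbar z).toReal)) μbar := by
    intro k
    have h := ((integrable_rnDeriv_smul_iff (habs k)).mpr (hint k)).const_mul
      (((T : ℝ) + 1)⁻¹)
    refine h.congr (Filter.Eventually.of_forall fun z => ?_)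
    simp [smul_eq_mul]; ring
  rw [integral_finset_sum _ (fun k _ => hintbar k)]
  have hterm : ∀ k : Fin (T + 1),
      ∫ z, f (ψ k z) * (((T : ℝ) + 1)⁻¹ * ((μk k).rnDeriv μbar z).toReal) ∂μbar
      = ((T : ℝ) + 1)⁻¹ * ∫ z, f z ∂μ := by
    intro k
    have h1 : ∫ z, f (ψ k z) * (((T : ℝ) + 1)⁻¹ * ((μk k).rnDeriv μbar z).toReal) ∂μbar
        = ((T : ℝ) + 1)⁻¹ * ∫ z, ((μk k).rnDeriv μbar z).toReal • f (ψ k z) ∂μbar := by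
      rw [← integral_const_mul]
      congr 1; funext z; simp [smul_eq_mul]; ring
    rw [h1, integral_rnDeriv_smul (habs k), hμk,
      (ψ k).symm.measurableEmbedding.integral_map]
    simp [Function.comp]
  rw [Finset.sum_congr rfl (fun k _ => hterm k)]
  simp only [Finset.sum_const, Finset.card_univ, Fintype.card_fin, nsmul_eq_mul]
  rw [← mul_assoc]
  have : ((T : ℝ) + 1) ≠ 0 := by positivity
  push_cast
  field_simp
end

section
/- Let μ, ν be probability measures on (Z, 𝒵), υ a σ-finite measure with υ ≫ μ and υ ≫ ν, and suppose M, M* : Z × 𝒵 → [0,1] are Markov kernels satisfying υ(dz) M(z, dz') = υ(dz') M*(z', dz) (i.e. the pair is υ-reversible in the two-kernel sense). Then for z with (dν/dυ)(z) > 0, the Radon–Nikodym derivative of the swapped measure μ ⊗' M* with respect to ν ⊗ M satisfies d(μ ⊗' M*)/d(ν ⊗ M)(z, z') = (dμ/dυ)(z') / (dν/dυ)(z). -/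
open MeasureTheory ProbabilityTheory
open scoped ENNReal ProbabilityTheory

lemma sigmaFinite_compProd_aux {Z : Type*} [MeasurableSpace Z] (υ : Measure Z) [SigmaFinite υ]
    (M : Kernel Z Z) [IsMarkovKernel M] : SigmaFinite (υ ⊗ₘ M) := by
  refine ⟨⟨⟨fun n => (spanningSets υ n) ×ˢ Set.univ, fun _ => trivial, fun n => ?_, ?_⟩⟩⟩
  · rw [Measure.compProd_apply_prod (measurableSet_spanningSets υ n) MeasurableSet.univ]
    calc ∫⁻ z in spanningSets υ n, M z Set.univ ∂υ
        = ∫⁻ _ in spanningSets υ n, 1 ∂υ := by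
          refine lintegral_congr fun z => by simp
      _ < ∞ := by simp [measure_spanningSets_lt_top υ n]
  · rw [← Set.iUnion_prod_const, iUnion_spanningSets, Set.univ_prod_univ]

lemma compProd_eq_withDensity_aux {Z : Type*} [MeasurableSpace Z] (ν υ : Measure Z)
    [IsProbabilityMeasure ν] [SigmaFinite υ] (hν : ν ≪ υ) (M : Kernel Z Z) [IsMarkovKernel M] :
    ν ⊗ₘ M = (υ ⊗ₘ M).withDensity (fun p => ν.rnDeriv υ p.1) := by
  have hg : Measurable (fun p : Z × Z => ν.rnDeriv υ p.1) :=
    (ν.measurable_rnDeriv υ).comp measurable_fst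
  ext s hs
  rw [withDensity_apply _ hs, Measure.compProd_apply hs,
    ← lintegral_indicator hs, Measure.lintegral_compProd (hg.indicator hs)]
  rw [← lintegral_rnDeriv_mul hν
    (Kernel.measurable_kernel_prodMk_left hs).aemeasurable]
  refine lintegral_congr fun z => ?_
  have : ∀ z', s.indicator (fun p : Z × Z => ν.rnDeriv υ p.1) (z, z')
      = (Prod.mk z ⁻¹' s).indicator (fun _ => ν.rnDeriv υ z) z' := by
    intro z'; rfl
  simp_rw [this]
  rw [lintegral_indicator (measurable_prodMk_left hs), setLIntegral_const]

lemma rnDeriv_compProd_aux {Z : Type*} [MeasurableSpace Z] (ν υ : Measure Z)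
    [IsProbabilityMeasure ν] [SigmaFinite υ] (hν : ν ≪ υ) (M : Kernel Z Z) [IsMarkovKernel M] :
    (ν ⊗ₘ M).rnDeriv (υ ⊗ₘ M) =ᵐ[υ ⊗ₘ M] fun p => ν.rnDeriv υ p.1 := by
  haveI := sigmaFinite_compProd_aux υ M
  rw [compProd_eq_withDensity_aux ν υ hν M]
  exact Measure.rnDeriv_withDensity _ ((ν.measurable_rnDeriv υ).comp measurable_fst)

theorem stmt6 {Z : Type*} [MeasurableSpace Z]
    (μ ν : Measure Z) [IsProbabilityMeasure μ] [IsProbabilityMeasure ν]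
    (υ : Measure Z) [SigmaFinite υ] (hμ : μ ≪ υ) (hν : ν ≪ υ)
    (M Mstar : Kernel Z Z) [IsMarkovKernel M] [IsMarkovKernel Mstar]
    (hrev : υ ⊗ₘ M = (υ ⊗ₘ Mstar).map Prod.swap) :
    ∀ᵐ p ∂(ν ⊗ₘ M), 0 < ν.rnDeriv υ p.1 →
      ((μ ⊗ₘ Mstar).map Prod.swap).rnDeriv (ν ⊗ₘ M) p
        = μ.rnDeriv υ p.2 / ν.rnDeriv υ p.1 := by
  haveI := sigmaFinite_compProd_aux υ M
  haveI := sigmaFinite_compProd_aux υ Mstar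
  haveI : IsProbabilityMeasure ((μ ⊗ₘ Mstar).map Prod.swap) :=
    Measure.isProbabilityMeasure_map measurable_swap.aemeasurable
  set μ' : Measure (Z × Z) := (μ ⊗ₘ Mstar).map Prod.swap with hμ'
  have hacc : (ν ⊗ₘ M) ≪ (υ ⊗ₘ M) := hν.compProd_left M
  -- rnDeriv of μ' with respect to υ ⊗ₘ M
  have hswap : MeasurableEmbedding (Prod.swap : Z × Z → Z × Z) :=
    (MeasurableEquiv.prodComm : Z × Z ≃ᵐ Z × Z).measurableEmbedding
  have h3' : (fun q => μ'.rnDeriv ((υ ⊗ₘ Mstar).map Prod.swap) (Prod.swap q))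
      =ᵐ[υ ⊗ₘ Mstar] (μ ⊗ₘ Mstar).rnDeriv (υ ⊗ₘ Mstar) :=
    hswap.rnDeriv_map (μ ⊗ₘ Mstar) (υ ⊗ₘ Mstar)
  have h3 : μ'.rnDeriv (υ ⊗ₘ M) =ᵐ[υ ⊗ₘ M] fun p => μ.rnDeriv υ p.2 := by
    rw [hrev]
    have hset : MeasurableSet {p : Z × Z |
        μ'.rnDeriv ((υ ⊗ₘ Mstar).map Prod.swap) p = μ.rnDeriv υ p.2} :=
      measurableSet_eq_fun (μ'.measurable_rnDeriv _)
        ((μ.measurable_rnDeriv υ).comp measurable_snd)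
    rw [Filter.EventuallyEq, ae_map_iff measurable_swap.aemeasurable hset]
    filter_upwards [h3', rnDeriv_compProd_aux μ υ hμ Mstar] with q e1 e2
    simpa using e1.trans e2
  have h2 : (ν ⊗ₘ M).rnDeriv (υ ⊗ₘ M) =ᵐ[υ ⊗ₘ M] fun p => ν.rnDeriv υ p.1 :=
    rnDeriv_compProd_aux ν υ hν M
  have h1 : μ'.rnDeriv (ν ⊗ₘ M) * (ν ⊗ₘ M).rnDeriv (υ ⊗ₘ M)
      =ᵐ[ν ⊗ₘ M] μ'.rnDeriv (υ ⊗ₘ M) :=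
    Measure.rnDeriv_mul_rnDeriv' hacc
  have h4 : ∀ᵐ p ∂(ν ⊗ₘ M), 0 < (ν ⊗ₘ M).rnDeriv (υ ⊗ₘ M) p :=
    Measure.rnDeriv_pos hacc
  have h5 : ∀ᵐ p ∂(ν ⊗ₘ M), (ν ⊗ₘ M).rnDeriv (υ ⊗ₘ M) p < ∞ :=
    hacc.ae_le (Measure.rnDeriv_lt_top (ν ⊗ₘ M) (υ ⊗ₘ M))
  filter_upwards [h1, hacc.ae_le h2, hacc.ae_le h3, h4, h5] with p e1 e2 e3 e4 e5 _
  rw [ENNReal.eq_div_iff (by rw [← e2]; exact e4.ne') (by rw [← e2]; exact e5.ne)]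
  rw [← e2, ← e3, mul_comm]
  exact e1
end

section
/- Let ν̄ be a probability measure on Z^{T+1} and M̄ a Markov kernel from Z^{T+1} to Z^{T+1} defined by M̄(𝐳, d𝐳') = ∑_{k=0}^{T} ν̄(k | 𝐳) R(z_k, dz'₀) M^{⊗T}(z'₀, d𝐳'_{-0}), where ν̄(k, d𝐳) = (T+1)⁻¹ w_k(𝐳) ν ⊗ M_ν^{⊗T}(d𝐳) is a mixture with ν̄(f̄) recovering ν-expectations. If ν R = ν (R leaves ν invariant), then the marginal law after one step satisfies ν̄ M̄ = ν ⊗ M^{⊗T}, i.e. the pushforward of ν̄ through M̄ equals the law of a trajectory started from ν and propagated by T independent applications of M. -/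
open MeasureTheory ProbabilityTheory
open scoped ENNReal

theorem stmt8 {Z : Type*} [MeasurableSpace Z] (T : ℕ)
    (ν : Measure Z) [IsProbabilityMeasure ν]
    (νbar : Measure (Fin (T + 1) → Z)) [IsProbabilityMeasure νbar]
    (w : Fin (T + 1) → (Fin (T + 1) → Z) → ℝ≥0∞) (hw : ∀ k, Measurable (w k))
    (hkey : ∀ f : Z → ℝ≥0∞, Measurable f →
      ∫⁻ zs, ∑ k, w k zs * f (zs k) ∂νbar = ∫⁻ z, f z ∂ν)
    (R : Kernel Z Z) [IsMarkovKernel R] (hR : ν.bind (fun z => R z) = ν)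
    (κ : Kernel Z (Fin (T + 1) → Z)) [IsMarkovKernel κ]
    (Mbar : (Fin (T + 1) → Z) → Measure (Fin (T + 1) → Z))
    (hMbar : ∀ zs, Mbar zs = ∑ k, w k zs • (R (zs k)).bind (fun z => κ z)) :
    ∀ A, MeasurableSet A →
      ∫⁻ zs, Mbar zs A ∂νbar = ν.bind (fun z => κ z) A := by
  intro A hA
  have hcomp : ∀ z : Z, (R z).bind (fun z => κ z) = (κ ∘ₖ R) z := by
    intro z
    rw [Kernel.comp_apply]
  have hf : Measurable fun z => (κ ∘ₖ R) z A := Kernel.measurable_coe _ hA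
  have h1 : ∀ zs, Mbar zs A = ∑ k, w k zs * (κ ∘ₖ R) (zs k) A := by
    intro zs
    rw [hMbar zs]
    simp only [Measure.coe_finset_sum, Finset.sum_apply, Measure.smul_apply,
      smul_eq_mul, hcomp]
  calc ∫⁻ zs, Mbar zs A ∂νbar
      = ∫⁻ zs, ∑ k, w k zs * (κ ∘ₖ R) (zs k) A ∂νbar := by
        simp only [h1]
    _ = ∫⁻ z, (κ ∘ₖ R) z A ∂ν := hkey _ hf
    _ = ν.bind (fun z => (R z).bind (fun z => κ z)) A := by
        rw [Measure.bind_apply hA]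
        · simp only [hcomp]
        · exact ((Measure.measurable_bind' κ.measurable).comp R.measurable).aemeasurable
    _ = (ν.bind (fun z => R z)).bind (fun z => κ z) A := by
        rw [Measure.bind_bind R.measurable.aemeasurable κ.measurable.aemeasurable]
    _ = ν.bind (fun z => κ z) A := by rw [hR]
end

section
/- Let A, B be real-valued integrable random variables on a probability space with |A/B| ≤ M almost surely for some M > 0, and set a = E[A], b = E[B] with b ≠ 0. Then Var(A/B) ≤ E[|A/B − a/b|²] ≤ (2/b²)(Var(A) + M² Var(B)), and |E[A/B] − a/b| ≤ √(Var(A/B) Var(B)) / |b|. -/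
open MeasureTheory ProbabilityTheory

section aux
variable {Ω : Type*} [MeasurableSpace Ω] {P : Measure Ω} [IsProbabilityMeasure P]

lemma var_eq' (X : Ω → ℝ) (hX : MemLp X 2 P) :
    variance X P = ∫ ω, (X ω - ∫ x, X x ∂P) ^ 2 ∂P := by
  rw [variance_eq_integral hX.aestronglyMeasurable.aemeasurable]

lemma var_le' (X : Ω → ℝ) (hX : MemLp X 2 P) (c : ℝ) :
    variance X P ≤ ∫ ω, (X ω - c) ^ 2 ∂P := by
  set μ := ∫ x, X x ∂P with hμ
  have hXi : Integrable X P := hX.integrable one_le_two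
  have h1 : Integrable (fun ω => (X ω - μ) ^ 2) P := by
    simpa using (hX.sub (memLp_const μ)).integrable_sq
  have h2 : Integrable (fun ω => X ω - μ) P := hXi.sub (integrable_const μ)
  have hz : ∫ ω, (X ω - μ) ∂P = 0 := by
    rw [integral_sub hXi (integrable_const μ), integral_const]; simp [hμ]
  have key : ∫ ω, (X ω - c) ^ 2 ∂P = ∫ ω, (X ω - μ) ^ 2 ∂P + (μ - c) ^ 2 := by
    have h3 : Integrable (fun ω => (X ω - μ) ^ 2 + 2 * (μ - c) * (X ω - μ)) P :=
      h1.add (h2.const_mul _)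
    have h4 : Integrable (fun ω => 2 * (μ - c) * (X ω - μ)) P := h2.const_mul _
    have hfun : (fun ω => (X ω - c) ^ 2)
        = fun ω => ((X ω - μ) ^ 2 + 2 * (μ - c) * (X ω - μ)) + (μ - c) ^ 2 := by
      funext ω; ring
    rw [hfun, integral_add h3 (integrable_const _),
      integral_add h1 h4, integral_const_mul, hz, integral_const]
    simp
  rw [var_eq' X hX, key]
  nlinarith [sq_nonneg (μ - c)]

end aux

theorem stmt11 {Ω : Type*} [MeasurableSpace Ω] (P : Measure Ω) [IsProbabilityMeasure P]
    (A B : Ω → ℝ) (hA : MemLp A 2 P) (hB : MemLp B 2 P)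
    (hB0 : ∀ᵐ ω ∂P, B ω ≠ 0)
    (M : ℝ) (hM : 0 < M) (hbound : ∀ᵐ ω ∂P, |A ω / B ω| ≤ M)
    (hb : ∫ ω, B ω ∂P ≠ 0) :
    variance (fun ω => A ω / B ω) P
        ≤ ∫ ω, (A ω / B ω - (∫ ω', A ω' ∂P) / (∫ ω', B ω' ∂P)) ^ 2 ∂P ∧
    ∫ ω, (A ω / B ω - (∫ ω', A ω' ∂P) / (∫ ω', B ω' ∂P)) ^ 2 ∂P
        ≤ 2 / (∫ ω', B ω' ∂P) ^ 2 * (variance A P + M ^ 2 * variance B P) ∧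
    |(∫ ω, A ω / B ω ∂P) - (∫ ω', A ω' ∂P) / (∫ ω', B ω' ∂P)|
        ≤ Real.sqrt (variance (fun ω => A ω / B ω) P * variance B P)
          / |∫ ω', B ω' ∂P| := by
  set a := ∫ ω', A ω' ∂P with ha
  set b := ∫ ω', B ω' ∂P with hbdef
  set R := fun ω => A ω / B ω with hR
  have hRm : AEStronglyMeasurable R P :=
    (hA.aestronglyMeasurable.aemeasurable.div hB.aestronglyMeasurable.aemeasurable).aestronglyMeasurable
  have hR2 : MemLp R 2 P := MemLp.of_bound hRm M (by simpa [Real.norm_eq_abs] using hbound)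
  have hRi : Integrable R P := hR2.integrable one_le_two
  have hAi : Integrable A P := hA.integrable one_le_two
  have hBi : Integrable B P := hB.integrable one_le_two
  have hb2 : (0:ℝ) < b ^ 2 := by positivity
  refine ⟨var_le' R hR2 (a / b), ?_, ?_⟩
  · -- second inequality
    have hpt : ∀ᵐ ω ∂P, (R ω - a / b) ^ 2
        ≤ 2 / b ^ 2 * ((A ω - a) ^ 2 + M ^ 2 * (B ω - b) ^ 2) := by
      filter_upwards [hB0, hbound] with ω hBω habs
      have hAB : R ω * B ω = A ω := by
        simp only [hR]; field_simp
      have hr2 : (R ω) ^ 2 ≤ M ^ 2 := by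
        have := sq_le_sq' (neg_le_of_abs_le habs |>.trans_eq rfl) (le_of_abs_le habs)
        simpa using this
      have hx : (R ω * (b - B ω)) ^ 2 ≤ M ^ 2 * (b - B ω) ^ 2 := by
        have : (R ω * (b - B ω)) ^ 2 = (R ω) ^ 2 * (b - B ω) ^ 2 := by ring
        rw [this]
        exact mul_le_mul_of_nonneg_right hr2 (sq_nonneg _)
      have heq : (R ω - a / b) ^ 2
          = (R ω * (b - B ω) + (A ω - a)) ^ 2 / b ^ 2 := by
        rw [← hAB]
        field_simp
        ring
      rw [heq, div_le_iff₀ hb2]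
      have h2sq : (R ω * (b - B ω) + (A ω - a)) ^ 2
          ≤ 2 * (R ω * (b - B ω)) ^ 2 + 2 * (A ω - a) ^ 2 := by
        nlinarith [sq_nonneg (R ω * (b - B ω) - (A ω - a))]
      calc (R ω * (b - B ω) + (A ω - a)) ^ 2
          ≤ 2 * (R ω * (b - B ω)) ^ 2 + 2 * (A ω - a) ^ 2 := h2sq
        _ ≤ 2 * (M ^ 2 * (b - B ω) ^ 2) + 2 * (A ω - a) ^ 2 := by nlinarith [hx]
        _ = 2 / b ^ 2 * ((A ω - a) ^ 2 + M ^ 2 * (B ω - b) ^ 2) * b ^ 2 := by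
            field_simp; ring
    have hIL : Integrable (fun ω => (R ω - a / b) ^ 2) P := by
      simpa using (hR2.sub (memLp_const (a / b))).integrable_sq
    have hIA : Integrable (fun ω => (A ω - a) ^ 2) P := by
      simpa using (hA.sub (memLp_const a)).integrable_sq
    have hIB : Integrable (fun ω => (B ω - b) ^ 2) P := by
      simpa using (hB.sub (memLp_const b)).integrable_sq
    have hIR : Integrable (fun ω => 2 / b ^ 2 * ((A ω - a) ^ 2 + M ^ 2 * (B ω - b) ^ 2)) P :=
      ((hIA.add (hIB.const_mul (M ^ 2))).const_mul _)
    calc ∫ ω, (R ω - a / b) ^ 2 ∂P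
        ≤ ∫ ω, 2 / b ^ 2 * ((A ω - a) ^ 2 + M ^ 2 * (B ω - b) ^ 2) ∂P :=
          integral_mono_ae hIL hIR hpt
      _ = 2 / b ^ 2 * (variance A P + M ^ 2 * variance B P) := by
          have hI5 : Integrable (fun ω => M ^ 2 * (B ω - b) ^ 2) P := hIB.const_mul _
          rw [integral_const_mul, integral_add hIA hI5, integral_const_mul,
            var_eq' A hA, var_eq' B hB]
  · -- third inequality
    set μR := ∫ ω, R ω ∂P with hμR
    have hprod : Integrable (fun ω => R ω * (b - B ω)) P := by
      refine Integrable.bdd_mul (c := M) ((integrable_const b).sub hBi) hRm ?_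
      simpa [Real.norm_eq_abs] using hbound
    have hAB : ∀ᵐ ω ∂P, R ω * B ω = A ω := by
      filter_upwards [hB0] with ω hBω
      simp only [hR]; field_simp
    -- ∫ R (b - B) = b μR - a
    have hint1 : ∫ ω, R ω * (b - B ω) ∂P = b * μR - a := by
      have : ∫ ω, R ω * (b - B ω) ∂P = ∫ ω, (b * R ω - A ω) ∂P := by
        refine integral_congr_ae ?_
        filter_upwards [hAB] with ω h
        rw [mul_sub, h]; ring
      have h6 : Integrable (fun ω => b * R ω) P := hRi.const_mul b
      rw [this, integral_sub h6 hAi, integral_const_mul]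
    -- center: ∫ (R - μR)(b - B) = ∫ R (b - B)
    have hint2 : ∫ ω, (R ω - μR) * (b - B ω) ∂P = b * μR - a := by
      have : ∫ ω, (R ω - μR) * (b - B ω) ∂P
          = ∫ ω, R ω * (b - B ω) ∂P - μR * ∫ ω, (b - B ω) ∂P := by
        have h7 : Integrable (fun ω => μR * (b - B ω)) P :=
          (((integrable_const b).sub hBi)).const_mul μR
        rw [← integral_const_mul, ← integral_sub hprod h7]
        congr 1; funext ω; ring
      rw [this, hint1, integral_sub (integrable_const b) hBi, integral_const]
      simp [hbdef]
    -- Cauchy-Schwarz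
    have hconj : Real.HolderConjugate 2 2 := by
      rw [Real.holderConjugate_iff]; norm_num
    have hf2 : MemLp (fun ω => R ω - μR) (ENNReal.ofReal 2) P := by
      rw [ENNReal.ofReal_ofNat]
      exact hR2.sub (memLp_const μR)
    have hg2 : MemLp (fun ω => b - B ω) (ENNReal.ofReal 2) P := by
      rw [ENNReal.ofReal_ofNat]
      exact (memLp_const b).sub hB
    have hCS := integral_mul_norm_le_Lp_mul_Lq (μ := P) hconj hf2 hg2
    have habsint : |∫ ω, (R ω - μR) * (b - B ω) ∂P|
        ≤ ∫ ω, ‖R ω - μR‖ * ‖b - B ω‖ ∂P := by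
      rw [← Real.norm_eq_abs]
      refine (norm_integral_le_integral_norm _).trans_eq ?_
      congr 1; funext ω; rw [norm_mul]
    have hBrw : ∫ ω, ‖b - B ω‖ ^ (2:ℝ) ∂P = variance B P := by
      rw [var_eq' B hB]
      congr 1; funext ω
      rw [Real.rpow_two, Real.norm_eq_abs, sq_abs, ← hbdef]
      ring
    have hRrw2 : ∫ ω, ‖R ω - μR‖ ^ (2:ℝ) ∂P = variance R P := by
      rw [var_eq' R hR2, ← hμR]
      congr 1; funext ω
      rw [Real.rpow_two, Real.norm_eq_abs, sq_abs]
    have key : |b * μR - a| ≤ Real.sqrt (variance R P * variance B P) := by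
      rw [← hint2]
      refine (habsint.trans (hCS.trans_eq ?_))
      rw [hRrw2, hBrw, ← Real.sqrt_eq_rpow, ← Real.sqrt_eq_rpow,
        ← Real.sqrt_mul (variance_nonneg _ _)]
    have e : (∫ ω, R ω ∂P) - a / b = (b * μR - a) / b := by
      rw [← hμR]; field_simp
    rw [e, abs_div]
    gcongr
end

section
/- With μ̄(k, dz) = (T+1)⁻¹ μ^{ψₖ⁻¹}(dz), let Ž ∼ μ̄ (the marginal) and let μ̂_check(f) := ∑_{k=0}^{T} f(ψₖ(Ž)) · (dμ^{ψₖ⁻¹}/d(∑_l μ^{ψ_l⁻¹}))(Ž). If the maps ψₖ are volume preserving with respect to a common dominating σ-finite measure υ (υ^{ψₖ} = υ) and μ has density μ(z) w.r.t. υ, then μ̂_check(f) = ∑ₖ f(ψₖ(Ž)) μ(ψₖ(Ž)) / ∑_l μ(ψ_l(Ž)), and E[μ̂_check(f)] = μ(f). -/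
open MeasureTheory
open scoped ENNReal

theorem stmt13 {Z : Type*} [MeasurableSpace Z] (υ : Measure Z) [SigmaFinite υ]
    (μ : Measure Z) [IsProbabilityMeasure μ] (hμυ : μ ≪ υ)
    (T : ℕ) (ψ : Fin (T + 1) → Z ≃ᵐ Z)
    (hψυ : ∀ k, υ.map (ψ k) = υ) (hψ0 : ψ 0 = MeasurableEquiv.refl Z)
    (μbar : Measure Z)
    (hμbar : μbar = ((T : ℝ≥0∞) + 1)⁻¹ • ∑ k, μ.map (ψ k).symm)
    (f : Z → ℝ) (hf : Integrable f μ) :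
    (∀ᵐ z ∂μbar,
      ∑ k, f (ψ k z) * ((μ.map (ψ k).symm).rnDeriv (∑ l, μ.map (ψ l).symm) z).toReal
        = (∑ k, f (ψ k z) * (μ.rnDeriv υ (ψ k z)).toReal)
          / (∑ l, (μ.rnDeriv υ (ψ l z)).toReal)) ∧
    ∫ z, (∑ k, f (ψ k z) * (μ.rnDeriv υ (ψ k z)).toReal)
        / (∑ l, (μ.rnDeriv υ (ψ l z)).toReal) ∂μbar = ∫ z, f z ∂μ := by
  classical
  set m := μ.rnDeriv υ with hm_def
  have hm : Measurable m := Measure.measurable_rnDeriv μ υ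
  have hμm : υ.withDensity m = μ := Measure.withDensity_rnDeriv_eq μ υ hμυ
  have hmap_symm : ∀ k, υ.map (ψ k).symm = υ := by
    intro k
    conv_lhs => rw [← hψυ k]
    rw [Measure.map_map (ψ k).symm.measurable (ψ k).measurable]
    simp
  have hν : ∀ k, μ.map (ψ k).symm = υ.withDensity (fun z => m (ψ k z)) := by
    intro k
    rw [← hμm]
    ext s hs
    rw [Measure.map_apply (ψ k).symm.measurable hs,
      withDensity_apply _ ((ψ k).symm.measurable hs),
      withDensity_apply _ hs]
    conv_rhs => rw [← hmap_symm k]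
    rw [setLIntegral_map (f := fun z => m ((ψ k) z)) hs
      (hm.comp (ψ k).measurable) (ψ k).symm.measurable]
    simp
  set D : Z → ℝ≥0∞ := fun z => ∑ k, m (ψ k z) with hD_def
  have hDmeas : Measurable D := Finset.measurable_sum _ fun k _ => hm.comp (ψ k).measurable
  set S : Measure Z := ∑ l, μ.map (ψ l).symm with hS_def
  have hgmeas : ∀ k : Fin (T + 1), Measurable (fun z => m (ψ k z) / D z) :=
    fun k => (hm.comp (ψ k).measurable).div hDmeas
  have hS : S = υ.withDensity D := by
    rw [hS_def]
    ext s hs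
    rw [Measure.finset_sum_apply, withDensity_apply _ hs]
    simp_rw [hν, withDensity_apply _ hs]
    simp only [hD_def]
    rw [lintegral_finset_sum]
    exact fun k _ => hm.comp (ψ k).measurable
  haveI hSfin : IsFiniteMeasure S := by
    constructor
    rw [hS_def, Measure.finset_sum_apply]
    have h1 : ∀ l : Fin (T + 1), (μ.map (ψ l).symm) Set.univ = 1 := by
      intro l
      rw [Measure.map_apply (ψ l).symm.measurable MeasurableSet.univ]
      simp
    simp [h1]
  have hmfin : ∀ᵐ x ∂υ, m x < ∞ := Measure.rnDeriv_lt_top μ υ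
  have hfin : ∀ᵐ z ∂υ, ∀ k, m (ψ k z) < ∞ := by
    rw [ae_all_iff]
    intro k
    have h := hmfin
    rw [← hψυ k, ae_map_iff (ψ k).measurable.aemeasurable
      (measurableSet_lt hm measurable_const)] at h
    exact h
  have hDfin : ∀ᵐ z ∂υ, D z ≠ ∞ := by
    filter_upwards [hfin] with z hz
    exact (ENNReal.sum_lt_top.2 fun k _ => hz k).ne
  have hle : ∀ (k : Fin (T + 1)) z, m (ψ k z) ≤ D z :=
    fun k z => Finset.single_le_sum (f := fun i => m (ψ i z))
      (fun i _ => zero_le) (Finset.mem_univ k)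
  have hwd : ∀ k, μ.map (ψ k).symm = S.withDensity (fun z => m (ψ k z) / D z) := by
    intro k
    rw [hS, ← withDensity_mul _ hDmeas (hgmeas k), hν k]
    apply withDensity_congr_ae
    filter_upwards [hDfin] with z hz
    by_cases h0 : D z = 0
    · have hk0 : m (ψ k z) = 0 := le_antisymm (h0 ▸ hle k z) zero_le
      simp [Pi.mul_apply, h0, hk0]
    · simp only [Pi.mul_apply]
      rw [ENNReal.mul_div_cancel h0 hz]
  have hrn : ∀ k, (μ.map (ψ k).symm).rnDeriv S =ᵐ[S] fun z => m (ψ k z) / D z := by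
    intro k
    conv_lhs => rw [hwd k]
    exact Measure.rnDeriv_withDensity S (hgmeas k)
  have hSac : S ≪ υ := hS ▸ withDensity_absolutelyContinuous υ D
  have hacbar : μbar ≪ S := by
    rw [hμbar]
    exact Measure.AbsolutelyContinuous.rfl.smul_left _
  have hμbarac : μbar ≪ υ := hacbar.trans hSac
  constructor
  · have ha : ∀ᵐ z ∂S, ∀ k, (μ.map (ψ k).symm).rnDeriv S z = m (ψ k z) / D z :=
      ae_all_iff.2 hrn
    have hb : ∀ᵐ z ∂υ, ∀ k, m (ψ k z) ≠ ∞ := hfin.mono fun z hz k => (hz k).ne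
    filter_upwards [hacbar.ae_le ha, hμbarac.ae_le hb] with z ha hb
    simp_rw [ha, ENNReal.toReal_div]
    have hsum : ∑ l, (m (ψ l z)).toReal = (D z).toReal :=
      (ENNReal.toReal_sum fun k _ => hb k).symm
    rw [hsum, Finset.sum_div]
    exact Finset.sum_congr rfl fun k _ => (mul_div_assoc _ _ _).symm
  · set fm := hf.1.mk f with hfm_def
    have hfm_meas : StronglyMeasurable fm := hf.1.stronglyMeasurable_mk
    have hffm : f =ᵐ[μ] fm := hf.1.ae_eq_mk
    have hfm_int : Integrable fm μ := hf.congr hffm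
    have h1 : ∀ᵐ x ∂υ, m x ≠ 0 → f x = fm x := by
      have h := hffm
      rw [← hμm] at h
      exact (ae_withDensity_iff hm).1 h
    have hcomp : ∀ᵐ z ∂υ, ∀ k, m (ψ k z) ≠ 0 → f (ψ k z) = fm (ψ k z) := by
      rw [ae_all_iff]
      intro k
      have h2 := h1
      rw [← hψυ k, ← MeasurableEquiv.map_ae, Filter.eventually_map] at h2
      exact h2
    have hnum : ∀ᵐ z ∂υ,
        (∑ k, f (ψ k z) * (m (ψ k z)).toReal) = ∑ k, fm (ψ k z) * (m (ψ k z)).toReal := by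
      filter_upwards [hcomp] with z hz
      refine Finset.sum_congr rfl fun k _ => ?_
      by_cases h0 : m (ψ k z) = 0
      · simp [h0]
      · rw [hz k h0]
    have hcongr : (fun z => (∑ k, f (ψ k z) * (m (ψ k z)).toReal)
          / (∑ l, (m (ψ l z)).toReal))
        =ᵐ[μbar] fun z => (∑ k, fm (ψ k z) * (m (ψ k z)).toReal)
          / (∑ l, (m (ψ l z)).toReal) := by
      filter_upwards [hμbarac.ae_le hnum] with z hz
      rw [hz]
    rw [integral_congr_ae hcongr, integral_congr_ae hffm]
    rw [hμbar, integral_smul_measure, hS]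
    set Dn : Z → NNReal := fun z => (D z).toNNReal with hDn_def
    have hDn_meas : Measurable Dn := hDmeas.ennreal_toNNReal
    have hDcongr : υ.withDensity D = υ.withDensity (fun z => (Dn z : ℝ≥0∞)) :=
      withDensity_congr_ae (hDfin.mono fun z hz => (ENNReal.coe_toNNReal hz).symm)
    rw [hDcongr, integral_withDensity_eq_integral_smul hDn_meas]
    have hptwise : ∀ᵐ z ∂υ, Dn z • ((∑ k, fm (ψ k z) * (m (ψ k z)).toReal)
          / (∑ l, (m (ψ l z)).toReal)) = ∑ k, fm (ψ k z) * (m (ψ k z)).toReal := by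
      filter_upwards [hfin] with z hz
      have hDz : D z ≠ ∞ := (ENNReal.sum_lt_top.2 fun k _ => hz k).ne
      have hsum : ∑ l, (m (ψ l z)).toReal = (D z).toReal :=
        (ENNReal.toReal_sum fun k _ => (hz k).ne).symm
      have hDnr : (Dn z : ℝ) = (D z).toReal := rfl
      by_cases h0 : D z = 0
      · have hk0 : ∀ k : Fin (T + 1), m (ψ k z) = 0 :=
          fun k => le_antisymm (h0 ▸ hle k z) zero_le
        simp [hk0, hDn_def, h0]
      · have hne : (D z).toReal ≠ 0 := by
          simp [ENNReal.toReal_eq_zero_iff, h0, hDz]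
        rw [hsum, NNReal.smul_def, hDnr]
        exact mul_div_cancel₀ _ hne
    have hbase_int : Integrable (fun x => fm x * (m x).toReal) υ := by
      have h := (integrable_rnDeriv_smul_iff hμυ).2 hfm_int
      simpa [smul_eq_mul, mul_comm] using h
    have hterm_int : ∀ k : Fin (T + 1),
        Integrable (fun z => fm (ψ k z) * (m (ψ k z)).toReal) υ := by
      intro k
      have h := (integrable_map_equiv (ψ k) (fun x => fm x * (m x).toReal)).1
        (by rw [hψυ k]; exact hbase_int)
      exact h
    have hterm_eq : ∀ k : Fin (T + 1),
        ∫ z, fm (ψ k z) * (m (ψ k z)).toReal ∂υ = ∫ x, fm x ∂μ := by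
      intro k
      have h := MeasureTheory.integral_map_equiv (μ := υ) (ψ k)
        (fun x => fm x * (m x).toReal)
      rw [hψυ k] at h
      rw [← h]
      have h2 := integral_rnDeriv_smul (μ := μ) (ν := υ) hμυ (f := fm)
      simpa [smul_eq_mul, mul_comm] using h2
    rw [integral_congr_ae hptwise, integral_finset_sum _ (fun k _ => hterm_int k)]
    simp_rw [hterm_eq]
    rw [Finset.sum_const, Finset.card_univ, Fintype.card_fin]
    have hc : (((T : ℝ≥0∞) + 1)⁻¹).toReal = ((T : ℝ) + 1)⁻¹ := by
      rw [ENNReal.toReal_inv, ENNReal.toReal_add (by simp) (by simp),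
        ENNReal.toReal_natCast, ENNReal.toReal_one]
    rw [hc, nsmul_eq_mul, smul_eq_mul, ← mul_assoc]
    have hT : ((T : ℝ) + 1) ≠ 0 := by positivity
    push_cast
    rw [inv_mul_cancel₀ hT, one_mul]
end

section
/- For the inverse Gaussian family with fixed skewness s > 0 parameterized by its mean θ > 0, having density ν_θ(ε; s) = √(9θ/(2π ε³ s²)) exp(−9θ(ε−θ)²/(2θ² ε s²)) on (0, ∞), the minimizer over θ > 0 of the Kullback–Leibler divergence KL(ν, ν_θ) for a fixed probability measure ν on (0,∞) with finite E_ν[ε] and E_ν[ε⁻¹], is unique and equals θ̂ = (s²/9 + √(s⁴/81 + 4 E_ν[ε⁻¹]E_ν[ε])) / (2 E_ν[ε⁻¹]). -/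
open MeasureTheory

lemma logdens_eq (s θ ε : ℝ) (hs : 0 < s) (hθ : 0 < θ) (hε : 0 < ε) :
    Real.log (Real.sqrt (9 * θ / (2 * Real.pi * ε ^ 3 * s ^ 2)) *
        Real.exp (-(9 * θ * (ε - θ) ^ 2) / (2 * θ ^ 2 * ε * s ^ 2)))
    = ((1/2) * Real.log (9 / (2 * Real.pi * s ^ 2)) + 9 / s ^ 2 + (1/2) * Real.log θ)
      + (-(3/2)) * Real.log ε + (-(9 / (2 * s ^ 2 * θ))) * ε
      + (-(9 * θ / (2 * s ^ 2))) * ε⁻¹ := by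
  have hπ : 0 < Real.pi := Real.pi_pos
  have hu : 0 < 9 * θ / (2 * Real.pi * ε ^ 3 * s ^ 2) := by positivity
  rw [Real.log_mul (by positivity) (Real.exp_ne_zero _), Real.log_sqrt hu.le, Real.log_exp]
  have h1 : 9 * θ / (2 * Real.pi * ε ^ 3 * s ^ 2)
      = (9 / (2 * Real.pi * s ^ 2)) * θ / ε ^ 3 := by
    field_simp
  rw [h1, Real.log_div (by positivity) (by positivity),
    Real.log_mul (by positivity) (ne_of_gt hθ), Real.log_pow]
  have h2 : -(9 * θ * (ε - θ) ^ 2) / (2 * θ ^ 2 * ε * s ^ 2)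
      = 9 / s ^ 2 + (-(9 / (2 * s ^ 2 * θ))) * ε + (-(9 * θ / (2 * s ^ 2))) * ε⁻¹ := by
    field_simp; ring
  rw [h2]; push_cast; ring

set_option maxHeartbeats 1600000 in
theorem stmt14 (s : ℝ) (hs : 0 < s) (ν : Measure ℝ) [IsProbabilityMeasure ν]
    (hpos : ∀ᵐ ε ∂ν, 0 < ε)
    (hm1 : Integrable (fun ε => ε) ν) (hmInv : Integrable (fun ε => ε⁻¹) ν)
    (hlog : Integrable (fun ε => Real.log ε) ν)
    (dens : ℝ → ℝ → ℝ)
    (hdens : ∀ θ ε, dens θ ε =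
      Real.sqrt (9 * θ / (2 * Real.pi * ε ^ 3 * s ^ 2)) *
        Real.exp (-(9 * θ * (ε - θ) ^ 2) / (2 * θ ^ 2 * ε * s ^ 2)))
    (L : ℝ → ℝ) (hL : ∀ θ, L θ = ∫ ε, Real.log (dens θ ε) ∂ν)
    (θhat : ℝ)
    (hθhat : θhat = (s ^ 2 / 9 +
        Real.sqrt (s ^ 4 / 81 + 4 * (∫ ε, ε⁻¹ ∂ν) * (∫ ε, ε ∂ν)))
      / (2 * ∫ ε, ε⁻¹ ∂ν)) :
    0 < θhat ∧ ∀ θ, 0 < θ → θ ≠ θhat → L θ < L θhat := by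
  set A : ℝ := ∫ ε, ε ∂ν with hA_def
  set B : ℝ := ∫ ε, ε⁻¹ ∂ν with hB_def
  -- positivity of A and B
  have hA : 0 < A := by
    rw [hA_def, integral_pos_iff_support_of_nonneg_ae
      (hpos.mono fun ε hε => hε.le) hm1]
    have hsupp : ν (Function.support fun ε : ℝ => ε)ᶜ = 0 := by
      apply measure_mono_null _ (ae_iff.mp hpos)
      intro x hx
      simp only [Function.mem_support, Set.mem_compl_iff, not_not] at hx
      simp [hx]
    rw [prob_compl_eq_zero_iff (by
      exact (measurableSet_support (by fun_prop)))] at hsupp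
    rw [hsupp]; simp
  have hB : 0 < B := by
    rw [hB_def, integral_pos_iff_support_of_nonneg_ae
      (hpos.mono fun ε hε => by positivity) hmInv]
    have hsupp : ν (Function.support fun ε : ℝ => ε⁻¹)ᶜ = 0 := by
      apply measure_mono_null _ (ae_iff.mp hpos)
      intro x hx
      simp only [Function.mem_support, Set.mem_compl_iff, not_not] at hx
      intro hx'
      rw [inv_eq_zero] at hx
      exact lt_irrefl _ (hx ▸ hx')
    rw [prob_compl_eq_zero_iff (by
      exact (measurableSet_support (by fun_prop)))] at hsupp
    rw [hsupp]; simp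
  -- positivity of θhat
  have hsqnn : (0:ℝ) ≤ s ^ 4 / 81 + 4 * B * A := by positivity
  have hθhatpos : 0 < θhat := by
    rw [hθhat]
    have : 0 ≤ Real.sqrt (s ^ 4 / 81 + 4 * B * A) := Real.sqrt_nonneg _
    apply div_pos (by positivity) (by positivity)
  -- key quadratic identity : B * θhat^2 = (s^2/9) * θhat + A
  have hkey : B * θhat ^ 2 = (s ^ 2 / 9) * θhat + A := by
    have h1 : 2 * B * θhat - s ^ 2 / 9 = Real.sqrt (s ^ 4 / 81 + 4 * B * A) := by
      rw [hθhat]; field_simp; ring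
    have h2 : (2 * B * θhat - s ^ 2 / 9) ^ 2 = s ^ 4 / 81 + 4 * B * A := by
      rw [h1, Real.sq_sqrt hsqnn]
    nlinarith [hB, h2]
  -- formula for L
  have hLform : ∀ θ : ℝ, 0 < θ →
      L θ = (((1/2) * Real.log (9 / (2 * Real.pi * s ^ 2)) + 9 / s ^ 2
            + (1/2) * Real.log θ)
          + (-(3/2)) * (∫ ε, Real.log ε ∂ν)
          + (-(9 / (2 * s ^ 2 * θ))) * A + (-(9 * θ / (2 * s ^ 2))) * B) := by
    intro θ hθ
    rw [hL θ]
    have hcongr : (∫ ε, Real.log (dens θ ε) ∂ν)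
        = ∫ ε, (((1/2) * Real.log (9 / (2 * Real.pi * s ^ 2)) + 9 / s ^ 2
            + (1/2) * Real.log θ)
          + (-(3/2)) * Real.log ε + (-(9 / (2 * s ^ 2 * θ))) * ε
          + (-(9 * θ / (2 * s ^ 2))) * ε⁻¹) ∂ν := by
      apply integral_congr_ae
      filter_upwards [hpos] with ε hε
      rw [hdens θ ε]
      exact logdens_eq s θ ε hs hθ hε
    rw [hcongr]
    set c0 : ℝ := (1/2) * Real.log (9 / (2 * Real.pi * s ^ 2)) + 9 / s ^ 2
        + (1/2) * Real.log θ with hc0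
    have i1 : Integrable (fun ε : ℝ => (-(3/2) : ℝ) * Real.log ε) ν := hlog.const_mul _
    have i2 : Integrable (fun ε : ℝ => (-(9 / (2 * s ^ 2 * θ))) * ε) ν := hm1.const_mul _
    have i3 : Integrable (fun ε : ℝ => (-(9 * θ / (2 * s ^ 2))) * ε⁻¹) ν :=
      hmInv.const_mul _
    have j1 : Integrable (fun ε : ℝ => c0 + (-(3/2) : ℝ) * Real.log ε) ν :=
      (integrable_const c0).add i1
    have j2 : Integrable (fun ε : ℝ =>
        c0 + (-(3/2) : ℝ) * Real.log ε + (-(9 / (2 * s ^ 2 * θ))) * ε) ν := j1.add i2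
    rw [integral_add j2 i3, integral_add j1 i2, integral_add (integrable_const c0) i1,
      integral_const, integral_const_mul, integral_const_mul, integral_const_mul]
    simp [measure_univ, hA_def, hB_def]
  -- conclude
  refine ⟨hθhatpos, fun θ hθ hne => ?_⟩
  rw [hLform θ hθ, hLform θhat hθhatpos]
  have hlog_lt : Real.log θ - Real.log θhat < θ / θhat - 1 := by
    rw [← Real.log_div (ne_of_gt hθ) (ne_of_gt hθhatpos)]
    apply Real.log_lt_sub_one_of_pos (by positivity)
    intro h
    exact hne (by field_simp at h; linarith)
  have hquad : (1/2) * (θ / θhat - 1)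
      - (9 / (2 * s ^ 2)) * (A / θ - A / θhat + B * θ - B * θhat)
      = -(9 * A * (θ - θhat) ^ 2) / (2 * s ^ 2 * θ * θhat ^ 2) := by
    have hBval : B = ((s ^ 2 / 9) * θhat + A) / θhat ^ 2 := by
      field_simp at hkey ⊢; linarith
    rw [hBval]
    field_simp
    ring
  have hquadneg : -(9 * A * (θ - θhat) ^ 2) / (2 * s ^ 2 * θ * θhat ^ 2) ≤ 0 := by
    apply div_nonpos_of_nonpos_of_nonneg
    · nlinarith [sq_nonneg (θ - θhat)]
    · positivity
  have hcoef : 0 < 9 / (2 * s ^ 2) := by positivity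
  have hAdiv : A / θ = (9 / (2 * s ^ 2 * θ)) * A / (9 / (2 * s ^ 2)) := by
    field_simp
  -- final linear arithmetic
  have expand : (-(9 / (2 * s ^ 2 * θ))) * A + (-(9 * θ / (2 * s ^ 2))) * B
      - ((-(9 / (2 * s ^ 2 * θhat))) * A + (-(9 * θhat / (2 * s ^ 2))) * B)
      = -(9 / (2 * s ^ 2)) * (A / θ - A / θhat + B * θ - B * θhat) := by
    field_simp; ring
  have hsum : (1/2) * (Real.log θ - Real.log θhat)
      - (9 / (2 * s ^ 2)) * (A / θ - A / θhat + B * θ - B * θhat) < 0 := by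
    have h2 := hquadneg
    rw [← hquad] at h2
    linarith
  linarith [hsum, expand]
end

section
/- Let μ be a probability measure on Z, ψ : Z → Z invertible and υ-preserving with υ ≫ μ, and σ : Z → Z an involution (σ² = id) with μ ∘ σ = μ (density invariance) and υ^σ = υ. Define the Markov kernel P̄(z, dz') = α(z) δ_{ψ(z)}(dz') + (1 − α(z)) δ_{σ(z)}(dz') with α(z) = min{1, μ(ψ(z))/μ(z)} (and α(z) = 1 when μ(z) = 0 by an arbitrary convention on a null set). If additionally ψ⁻¹ = σ ∘ ψ ∘ σ, then P̄ leaves μ invariant: μ P̄ = μ. -/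
open MeasureTheory
open scoped ENNReal

theorem stmt18 {Z : Type*} [MeasurableSpace Z] (υ : Measure Z) [SigmaFinite υ]
    (μ : Measure Z) [IsProbabilityMeasure μ] (hμυ : μ ≪ υ)
    (ψ : Z ≃ᵐ Z) (hψ : υ.map ψ = υ)
    (σ : Z → Z) (hσmeas : Measurable σ) (hσinv : ∀ z, σ (σ z) = z)
    (hσυ : υ.map σ = υ)
    (hσμ : ∀ z, μ.rnDeriv υ (σ z) = μ.rnDeriv υ z)
    (hskew : ∀ z, ψ.symm z = σ (ψ (σ z)))
    (α : Z → ℝ≥0∞)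
    (hα : ∀ z, α z = min 1 (μ.rnDeriv υ (ψ z) / μ.rnDeriv υ z)) :
    ∀ A : Set Z, MeasurableSet A →
      ∫⁻ z, α z * A.indicator (fun _ => (1 : ℝ≥0∞)) (ψ z)
        + (1 - α z) * A.indicator (fun _ => (1 : ℝ≥0∞)) (σ z) ∂μ = μ A := by
  intro A hA
  set f := μ.rnDeriv υ with hfdef
  set I := A.indicator (fun _ => (1 : ℝ≥0∞)) with hIdef
  have hfm : Measurable f := μ.measurable_rnDeriv υ
  have hIm : Measurable I := measurable_const.indicator hA
  have hαm : Measurable α := by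
    have : α = fun z => min 1 (f (ψ z) / f z) := funext hα
    rw [this]
    exact measurable_const.min ((hfm.comp ψ.measurable).div hfm)
  have hgm : Measurable (fun z => α z * I (ψ z) + (1 - α z) * I (σ z)) :=
    ((hαm.mul (hIm.comp ψ.measurable)).add
      ((measurable_const.sub hαm).mul (hIm.comp hσmeas)))
  -- pass to υ
  rw [← lintegral_rnDeriv_mul hμυ hgm.aemeasurable]
  -- pointwise a.e. rewrite
  have key : ∀ᵐ z ∂υ,
      f z * (α z * I (ψ z) + (1 - α z) * I (σ z))
        = min (f z) (f (ψ z)) * I (ψ z) + (f z - min (f z) (f (ψ z))) * I (σ z) := by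
    filter_upwards [Measure.rnDeriv_lt_top μ υ] with z hz
    have hzT : f z ≠ ∞ := hz.ne
    have h1 : f z * α z = min (f z) (f (ψ z)) := by
      rw [hα z]
      rcases eq_or_ne (f z) 0 with h0 | h0
      · simp [h0]
      rcases le_total (f (ψ z)) (f z) with hle | hle
      · have : f (ψ z) / f z ≤ 1 := ENNReal.div_le_of_le_mul (by simpa using hle)
        rw [min_eq_right this, ENNReal.mul_div_cancel h0 hzT, min_eq_right hle]
      · have : (1 : ℝ≥0∞) ≤ f (ψ z) / f z :=
          (ENNReal.le_div_iff_mul_le (Or.inl h0) (Or.inl hzT)).2 (by simpa using hle)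
        rw [min_eq_left this, mul_one, min_eq_left hle]
    have h2 : f z * (1 - α z) = f z - min (f z) (f (ψ z)) := by
      rw [ENNReal.mul_sub (fun _ _ => hzT), mul_one, h1]
    rw [mul_add, ← mul_assoc, ← mul_assoc, h1, h2]
  rw [lintegral_congr_ae key]
  have hm1 : Measurable (fun w => min (f (ψ.symm w)) (f w) * I w) :=
    ((hfm.comp ψ.symm.measurable).min hfm).mul hIm
  have hm2 : Measurable (fun w => (f w - min (f w) (f (ψ.symm w))) * I w) :=
    (hfm.sub ((hfm.min (hfm.comp ψ.symm.measurable)))).mul hIm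
  have hT1 : ∫⁻ z, min (f z) (f (ψ z)) * I (ψ z) ∂υ
      = ∫⁻ w, min (f (ψ.symm w)) (f w) * I w ∂υ := by
    conv_rhs => rw [← hψ]
    rw [lintegral_map hm1 ψ.measurable]
    simp
  have hT2 : ∫⁻ z, (f z - min (f z) (f (ψ z))) * I (σ z) ∂υ
      = ∫⁻ w, (f w - min (f w) (f (ψ.symm w))) * I w ∂υ := by
    conv_rhs => rw [← hσυ]
    rw [lintegral_map hm2 hσmeas]
    refine lintegral_congr fun z => ?_
    have h3 : f (ψ.symm (σ z)) = f (ψ z) := by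
      rw [hskew (σ z), hσinv z, hσμ]
    rw [h3, hσμ]
  have hm0 : Measurable fun z => min (f z) (f (ψ z)) * I (ψ z) := by fun_prop
  rw [lintegral_add_left hm0, hT1, hT2, ← lintegral_add_left hm1]
  have : ∀ w, min (f (ψ.symm w)) (f w) * I w + (f w - min (f w) (f (ψ.symm w))) * I w
      = f w * I w := by
    intro w
    rw [min_comm, ← add_mul, add_tsub_cancel_of_le (min_le_left _ _)]
  rw [lintegral_congr this]
  have : ∫⁻ w, f w * I w ∂υ = ∫⁻ w in A, f w ∂υ := by
    rw [← lintegral_indicator hA]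
    refine lintegral_congr fun w => ?_
    by_cases h : w ∈ A <;> simp [hIdef, Set.indicator_apply, h]
  rw [this, Measure.setLIntegral_rnDeriv hμυ]
end

section
/- With μ̄(k, dz) = (T+1)⁻¹ μ^{ψ^{-k}}(dz) for a single invertible υ-preserving map ψ and its iterates, define the multinomial HMC kernel P(z, A) = (T+1)⁻¹ ∑_{k,l=0}^{T} μ̄(k | ψ^{-l}(z)) 1{ψ^{k−l}(z) ∈ A}. Then P is μ-reversible: for all bounded measurable f, g : Z → ℝ, ∫ f(z) P g(z) μ(dz) = ∫ g(z) P f(z) μ(dz); in particular μP = μ. -/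
open MeasureTheory
open scoped ENNReal

theorem stmt19 {Z : Type*} [MeasurableSpace Z] (υ : Measure Z) [SigmaFinite υ]
    (μ : Measure Z) [IsProbabilityMeasure μ] (hμυ : μ ≪ υ)
    (ψ : Z ≃ᵐ Z) (hψ : υ.map ψ = υ) (T : ℕ)
    (Φ : ℤ → Z → Z) (hΦ1 : Φ 1 = ψ) (hΦ0 : Φ 0 = id)
    (hΦadd : ∀ m n : ℤ, Φ (m + n) = Φ m ∘ Φ n)
    (hΦmeas : ∀ n : ℤ, Measurable (Φ n))
    (wgt : Fin (T + 1) → Fin (T + 1) → Z → ℝ)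
    (hwgt : ∀ k l z, wgt k l z =
      (μ.rnDeriv υ (Φ (((k : ℕ) : ℤ) - ((l : ℕ) : ℤ)) z)).toReal
        / ∑ j : Fin (T + 1), (μ.rnDeriv υ (Φ (((j : ℕ) : ℤ) - ((l : ℕ) : ℤ)) z)).toReal)
    (Pf : (Z → ℝ) → Z → ℝ)
    (hPf : ∀ h z, Pf h z = ((T : ℝ) + 1)⁻¹ *
      ∑ k : Fin (T + 1), ∑ l : Fin (T + 1),
        wgt k l z * h (Φ (((k : ℕ) : ℤ) - ((l : ℕ) : ℤ)) z)) :
    (∀ (f g : Z → ℝ) (Cf Cg : ℝ), Measurable f → Measurable g →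
      (∀ z, |f z| ≤ Cf) → (∀ z, |g z| ≤ Cg) →
      ∫ z, f z * Pf g z ∂μ = ∫ z, g z * Pf f z ∂μ) ∧
    (∀ (g : Z → ℝ) (Cg : ℝ), Measurable g → (∀ z, |g z| ≤ Cg) →
      ∫ z, Pf g z ∂μ = ∫ z, g z ∂μ) := by
  classical
  set ρ : Z → ℝ≥0∞ := μ.rnDeriv υ with hρ
  have hρmeas : Measurable ρ := Measure.measurable_rnDeriv μ υ
  have hΦcomp : ∀ (m n : ℤ) (z : Z), Φ m (Φ n z) = Φ (m + n) z := by
    intro m n z; rw [hΦadd]; rfl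
  have hΦinv : ∀ (n : ℤ) (z : Z), Φ (-n) (Φ n z) = z := by
    intro n z; rw [hΦcomp, neg_add_cancel, hΦ0]; rfl
  have hΦinv' : ∀ (n : ℤ) (z : Z), Φ n (Φ (-n) z) = z := by
    intro n z; rw [hΦcomp, add_neg_cancel, hΦ0]; rfl
  -- measurable equivalences
  have hemb : ∀ n : ℤ, MeasurableEmbedding (Φ n) := by
    intro n
    exact MeasurableEquiv.measurableEmbedding
      { toFun := Φ n, invFun := Φ (-n), left_inv := hΦinv n, right_inv := hΦinv' n,
        measurable_toFun := hΦmeas n, measurable_invFun := hΦmeas (-n) }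
  -- measure preservation
  have hneg1 : Φ (-1) = ⇑ψ.symm := by
    funext z
    have h : ψ (Φ (-1) z) = z := by rw [← hΦ1]; exact hΦinv' 1 z
    have h2 := congrArg ψ.symm h
    rwa [ψ.symm_apply_apply] at h2
  have hmp : ∀ n : ℤ, MeasurePreserving (Φ n) υ υ := by
    intro n
    induction n using Int.induction_on with
    | zero => rw [hΦ0]; exact MeasurePreserving.id υ
    | succ k ih =>
        have : Φ ((k : ℤ) + 1) = Φ 1 ∘ Φ (k : ℤ) := by
          rw [← hΦadd]; ring_nf
        rw [this, hΦ1]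
        exact (MeasurePreserving.mk ψ.measurable hψ).comp ih
    | pred k ih =>
        have : Φ (-(k : ℤ) - 1) = Φ (-1) ∘ Φ (-(k : ℤ)) := by
          rw [← hΦadd]; ring_nf
        rw [this, hneg1]
        have hψs : υ.map ψ.symm = υ := by
          conv_lhs => rw [← hψ]
          rw [Measure.map_map ψ.symm.measurable ψ.measurable]
          simp
        exact (MeasurePreserving.mk ψ.symm.measurable hψs).comp ih
  -- weight properties
  have hwmeas : ∀ k l, Measurable (wgt k l) := by
    intro k l
    have : wgt k l = fun z => (ρ (Φ (((k : ℕ) : ℤ) - ((l : ℕ) : ℤ)) z)).toReal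
        / ∑ j : Fin (T + 1), (ρ (Φ (((j : ℕ) : ℤ) - ((l : ℕ) : ℤ)) z)).toReal := by
      funext z; rw [hwgt]
    rw [this]
    exact ((hρmeas.comp (hΦmeas _)).ennreal_toReal).div
      (Finset.measurable_sum _ fun j _ => (hρmeas.comp (hΦmeas _)).ennreal_toReal)
  have hwnonneg : ∀ k l z, 0 ≤ wgt k l z := by
    intro k l z
    rw [hwgt]
    exact div_nonneg ENNReal.toReal_nonneg
      (Finset.sum_nonneg fun j _ => ENNReal.toReal_nonneg)
  have hwle1 : ∀ k l z, wgt k l z ≤ 1 := by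
    intro k l z
    rw [hwgt]
    apply div_le_one_of_le₀
    · exact Finset.single_le_sum (f := fun j : Fin (T + 1) =>
        (ρ (Φ (((j : ℕ) : ℤ) - ((l : ℕ) : ℤ)) z)).toReal)
        (fun j _ => ENNReal.toReal_nonneg) (Finset.mem_univ k)
    · exact Finset.sum_nonneg fun j _ => ENNReal.toReal_nonneg
  -- nonemptiness (for bounds nonneg)
  have hne : Nonempty Z := by
    by_contra h
    have h1 : μ Set.univ = 1 := measure_univ
    rw [Set.univ_eq_empty_iff.mpr (not_nonempty_iff.mp h), measure_empty] at h1
    exact zero_ne_one h1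
  -- integrability of the generic term
  have hint : ∀ (f g : Z → ℝ) (Cf Cg : ℝ), Measurable f → Measurable g →
      (∀ z, |f z| ≤ Cf) → (∀ z, |g z| ≤ Cg) → ∀ k l : Fin (T + 1),
      Integrable (fun z => f z * (wgt k l z *
        g (Φ (((k : ℕ) : ℤ) - ((l : ℕ) : ℤ)) z))) μ := by
    intro f g Cf Cg hf hg hbf hbg k l
    have hCf : 0 ≤ Cf := le_trans (abs_nonneg _) (hbf hne.some)
    refine ⟨(hf.mul ((hwmeas k l).mul (hg.comp (hΦmeas _)))).aestronglyMeasurable, ?_⟩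
    apply HasFiniteIntegral.of_bounded (C := Cf * Cg)
    filter_upwards with z
    have h1 : |wgt k l z * g (Φ (((k : ℕ) : ℤ) - ((l : ℕ) : ℤ)) z)| ≤ Cg := by
      rw [abs_mul, abs_of_nonneg (hwnonneg k l z)]
      calc wgt k l z * |g _| ≤ 1 * |g _| :=
            mul_le_mul_of_nonneg_right (hwle1 k l z) (abs_nonneg _)
        _ = |g _| := one_mul _
        _ ≤ Cg := hbg _
    calc ‖f z * _‖ = |f z| * |wgt k l z * g _| := abs_mul _ _
      _ ≤ Cf * Cg := mul_le_mul (hbf z) h1 (abs_nonneg _) hCf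
  -- the key per-term identity
  have key : ∀ (f g : Z → ℝ), ∀ k l : Fin (T + 1),
      ∫ z, f z * (wgt k l z * g (Φ (((k : ℕ) : ℤ) - ((l : ℕ) : ℤ)) z)) ∂μ
        = ∫ z, g z * (wgt l k z * f (Φ (((l : ℕ) : ℤ) - ((k : ℕ) : ℤ)) z)) ∂μ := by
    intro f g k l
    rw [← integral_rnDeriv_smul hμυ, ← integral_rnDeriv_smul hμυ, ← hρ]
    rw [← (hmp (((l : ℕ) : ℤ) - ((k : ℕ) : ℤ))).integral_comp (hemb _)
      (fun z => (ρ z).toReal • (f z * (wgt k l z *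
        g (Φ (((k : ℕ) : ℤ) - ((l : ℕ) : ℤ)) z))))]
    congr 1
    funext z
    have e1 : Φ (((k : ℕ) : ℤ) - ((l : ℕ) : ℤ)) (Φ (((l : ℕ) : ℤ) - ((k : ℕ) : ℤ)) z) = z := by
      rw [hΦcomp]
      have : ((k : ℕ) : ℤ) - ((l : ℕ) : ℤ) + (((l : ℕ) : ℤ) - ((k : ℕ) : ℤ)) = 0 := by ring
      rw [this, hΦ0]; rfl
    have e2 : ∀ j : Fin (T + 1),
        Φ (((j : ℕ) : ℤ) - ((l : ℕ) : ℤ)) (Φ (((l : ℕ) : ℤ) - ((k : ℕ) : ℤ)) z)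
          = Φ (((j : ℕ) : ℤ) - ((k : ℕ) : ℤ)) z := by
      intro j
      rw [hΦcomp]; congr 1; ring
    rw [hwgt, hwgt]
    simp only [e1, e2, smul_eq_mul]
    ring
  -- main reversibility statement
  have main : ∀ (f g : Z → ℝ) (Cf Cg : ℝ), Measurable f → Measurable g →
      (∀ z, |f z| ≤ Cf) → (∀ z, |g z| ≤ Cg) →
      ∫ z, f z * Pf g z ∂μ = ∫ z, g z * Pf f z ∂μ := by
    intro f g Cf Cg hf hg hbf hbg
    have expand : ∀ (f g : Z → ℝ) (Cf Cg : ℝ), Measurable f → Measurable g →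
        (∀ z, |f z| ≤ Cf) → (∀ z, |g z| ≤ Cg) →
        ∫ z, f z * Pf g z ∂μ = ((T : ℝ) + 1)⁻¹ *
          ∑ k : Fin (T + 1), ∑ l : Fin (T + 1),
            ∫ z, f z * (wgt k l z * g (Φ (((k : ℕ) : ℤ) - ((l : ℕ) : ℤ)) z)) ∂μ := by
      intro f g Cf Cg hf hg hbf hbg
      have : ∀ z, f z * Pf g z = ((T : ℝ) + 1)⁻¹ *
          ∑ k : Fin (T + 1), ∑ l : Fin (T + 1),
            f z * (wgt k l z * g (Φ (((k : ℕ) : ℤ) - ((l : ℕ) : ℤ)) z)) := by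
        intro z
        rw [hPf, mul_left_comm]
        congr 1
        simp only [Finset.mul_sum]
      simp only [this]
      rw [integral_const_mul]
      congr 1
      rw [integral_finset_sum _ fun k _ => integrable_finset_sum _
        fun l _ => hint f g Cf Cg hf hg hbf hbg k l]
      exact Finset.sum_congr rfl fun k _ =>
        integral_finset_sum _ fun l _ => hint f g Cf Cg hf hg hbf hbg k l
    rw [expand f g Cf Cg hf hg hbf hbg, expand g f Cg Cf hg hf hbg hbf]
    congr 1
    rw [Finset.sum_comm]
    exact Finset.sum_congr rfl fun l _ => Finset.sum_congr rfl fun k _ => key f g k l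
  refine ⟨main, ?_⟩
  -- stationarity
  intro g Cg hg hbg
  have h1meas : Measurable (fun _ : Z => (1 : ℝ)) := measurable_const
  have h1bd : ∀ z : Z, |(1 : ℝ)| ≤ (1 : ℝ) := fun _ => by norm_num
  have h2 := main (fun _ => 1) g 1 Cg h1meas hg h1bd hbg
  simp only [one_mul] at h2
  rw [h2]
  -- now show ∫ g * Pf 1 = ∫ g
  have hpos : ∀ᵐ z ∂μ, 0 < ρ z := Measure.rnDeriv_pos hμυ
  have hfin : ∀ᵐ z ∂μ, ρ z < ∞ := hμυ.ae_le (Measure.rnDeriv_lt_top μ υ)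
  have hone : ∀ᵐ z ∂μ, Pf (fun _ => 1) z = 1 := by
    filter_upwards [hpos, hfin] with z hz hz'
    rw [hPf]
    have hD : ∀ l : Fin (T + 1),
        0 < ∑ j : Fin (T + 1), (ρ (Φ (((j : ℕ) : ℤ) - ((l : ℕ) : ℤ)) z)).toReal := by
      intro l
      apply Finset.sum_pos' (fun j _ => ENNReal.toReal_nonneg)
      refine ⟨l, Finset.mem_univ l, ?_⟩
      have : Φ (((l : ℕ) : ℤ) - ((l : ℕ) : ℤ)) z = z := by
        rw [sub_self, hΦ0]; rfl
      rw [this]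
      exact ENNReal.toReal_pos hz.ne' hz'.ne
    have hsum : ∀ l : Fin (T + 1), ∑ k : Fin (T + 1), wgt k l z = 1 := by
      intro l
      have : ∀ k : Fin (T + 1), wgt k l z =
          (ρ (Φ (((k : ℕ) : ℤ) - ((l : ℕ) : ℤ)) z)).toReal
            / ∑ j : Fin (T + 1), (ρ (Φ (((j : ℕ) : ℤ) - ((l : ℕ) : ℤ)) z)).toReal :=
        fun k => hwgt k l z
      simp only [this]
      rw [← Finset.sum_div, div_self (hD l).ne']
    simp only [mul_one]
    rw [Finset.sum_comm]
    simp only [hsum]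
    rw [Finset.sum_const, Finset.card_univ, Fintype.card_fin, nsmul_eq_mul]
    push_cast
    rw [mul_one, inv_mul_cancel₀]
    positivity
  calc ∫ z, g z * Pf (fun _ => 1) z ∂μ = ∫ z, g z ∂μ := by
        apply integral_congr_ae
        filter_upwards [hone] with z hz
        rw [hz, mul_one]
end
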